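/- arXiv:2408.11607 — 3 statements merged into one kernel-verified Lean document; each statement's English description precedes it below -/
import Mathlib

section
/- Let N ≥ 1, let τ > 0, and let σ : Fin N → ℝ be a family of real numbers that is not constant. Let p be the softmax distribution with temperature τ associated to σ. Then the softmax-weighted average ∑ i, p i * σ i is strictly greater than the uniform average (1/N) * ∑ i, σ i. (This is the core inequality in the proof of Theorem 1: the expected approximate return of a policy adopted via softmax selection over received return estimates strictly exceeds the expected approximate return of an arbitrarily/uniformly chosen policy, as in the centralised case.) -/
open Finset Real

/-- The softmax distribution with temperature `τ` associated to `σ : Fin N → ℝ`. -/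
noncomputable def softmax {N : ℕ} (τ : ℝ) (σ : Fin N → ℝ) (i : Fin N) : ℝ :=
  Real.exp (σ i / τ) / ∑ j, Real.exp (σ j / τ)

/-- If `σ` is not constant, the softmax-weighted average of `σ` strictly exceeds
its uniform average. -/
theorem softmax_weighted_avg_gt_uniform_avg
    (N : ℕ) (hN : 1 ≤ N) (τ : ℝ) (hτ : 0 < τ)
    (σ : Fin N → ℝ) (hσ : ∃ i j, σ i ≠ σ j) :
    ∑ i, softmax τ σ i * σ i > (1 / N) * ∑ i, σ i := by
  set w : Fin N → ℝ := fun i => Real.exp (σ i / τ) with hw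
  have hwpos : ∀ i, 0 < w i := fun i => Real.exp_pos _
  have hS : 0 < ∑ j, w j := Finset.sum_pos (fun j _ => hwpos j) ⟨⟨0, hN⟩, Finset.mem_univ _⟩
  have hmono : ∀ i j : Fin N, σ i < σ j → w i < w j := by
    intro i j h
    exact Real.exp_lt_exp.2 (div_lt_div_of_pos_right h hτ)
  have hterm : ∀ i j : Fin N, 0 ≤ (w i - w j) * (σ i - σ j) := by
    intro i j
    rcases lt_trichotomy (σ i) (σ j) with h | h | h
    · have := hmono i j h
      exact le_of_lt (mul_pos_of_neg_of_neg (by linarith) (by linarith))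
    · simp [h]
    · have := hmono j i h
      exact le_of_lt (mul_pos (by linarith) (by linarith))
  obtain ⟨i₀, j₀, hij⟩ := hσ
  have hterm_pos : 0 < (w i₀ - w j₀) * (σ i₀ - σ j₀) := by
    rcases lt_or_gt_of_ne hij with h | h
    · have := hmono i₀ j₀ h
      exact mul_pos_of_neg_of_neg (by linarith) (by linarith)
    · have := hmono j₀ i₀ h
      exact mul_pos (by linarith) (by linarith)
  have hdouble : 0 < ∑ i : Fin N, ∑ j : Fin N, (w i - w j) * (σ i - σ j) := by
    have h1 : 0 < ∑ j : Fin N, (w i₀ - w j) * (σ i₀ - σ j) :=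
      Finset.sum_pos' (fun j _ => hterm i₀ j) ⟨j₀, Finset.mem_univ _, hterm_pos⟩
    exact Finset.sum_pos' (fun i _ => Finset.sum_nonneg fun j _ => hterm i j)
      ⟨i₀, Finset.mem_univ _, h1⟩
  have hkey : ∑ i : Fin N, ∑ j : Fin N, (w i - w j) * (σ i - σ j)
      = 2 * ((N : ℝ) * ∑ i, w i * σ i - (∑ i, w i) * ∑ i, σ i) := by
    have : ∀ i : Fin N, ∑ j : Fin N, (w i - w j) * (σ i - σ j)
        = (N : ℝ) * (w i * σ i) - w i * (∑ j, σ j) - σ i * (∑ j, w j)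
          + ∑ j, w j * σ j := by
      intro i
      rw [Finset.sum_congr rfl (fun j _ => by ring :
        ∀ j ∈ Finset.univ, (w i - w j) * (σ i - σ j)
          = w i * σ i - w i * σ j - σ i * w j + w j * σ j)]
      simp only [Finset.sum_add_distrib, Finset.sum_sub_distrib, ← Finset.mul_sum,
        ← Finset.sum_mul, Finset.sum_const, Finset.card_univ, Fintype.card_fin,
        nsmul_eq_mul]
      ring
    rw [Finset.sum_congr rfl (fun i _ => this i)]
    simp only [Finset.sum_add_distrib, Finset.sum_sub_distrib, ← Finset.mul_sum,
      ← Finset.sum_mul, Finset.sum_const, Finset.card_univ, Fintype.card_fin,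
      nsmul_eq_mul]
    ring
  have hmain : (∑ i, w i) * ∑ i, σ i < (N : ℝ) * ∑ i, w i * σ i := by
    nlinarith [hkey, hdouble]
  have hNpos : (0 : ℝ) < N := by exact_mod_cast hN
  have hsum : ∑ i, softmax τ σ i * σ i = (∑ i, w i * σ i) / (∑ j, w j) := by
    rw [Finset.sum_div]
    exact Finset.sum_congr rfl fun i _ => by rw [softmax]; ring
  rw [gt_iff_lt, hsum, lt_div_iff₀ hS, one_div, inv_mul_eq_div, div_mul_eq_mul_div,
    div_lt_iff₀ hNpos]
  nlinarith [hmain]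
end

section
/- Theorem 1 (networked agents outperform centralised agents in expectation). Let N ≥ 1, τ > 0, and let V : Fin N → ℝ (true discounted returns of the N candidate policies) and σ : Fin N → ℝ (their finite-horizon approximations) satisfy the order-preservation property (Assumption 1): for all i, j, σ i > σ j ↔ V i > V j. Assume V is not constant. Let p be the softmax distribution with temperature τ associated to σ. Then ∑ i, p i * V i > (1/N) * ∑ i, V i; that is, the expected true return of the policy adopted by the networked population (sampled with probability proportional to exp(σ i / τ)) strictly exceeds the expected true return of the policy adopted by the centralised population (a uniformly random index). -/
/-!
The softmax weights `exp (σ i / τ)` are strictly increasing in the true return `V i`, so by a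
strict form of Chebyshev's sum inequality the weighted mean of `V` beats its plain mean. The
strictness comes from the identity
`∑ i, ∑ j, (f i - f j) * (g i - g j) = 2 * (n * ∑ i, f i * g i - (∑ i, f i) * ∑ i, g i)`,
whose summands are all nonnegative and one of which is positive as soon as `g` is not constant.
-/

open Finset Real

section Chebyshev

variable {ι R : Type*}

theorem sum_sum_sub_mul_sub [Fintype ι] [CommRing R] (f g : ι → R) :
    ∑ i, ∑ j, (f i - f j) * (g i - g j) =
      2 * (Fintype.card ι * ∑ i, f i * g i - (∑ i, f i) * ∑ i, g i) := by
  simp only [sub_mul, mul_sub, sum_sub_distrib, sum_const, card_univ, nsmul_eq_mul,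
    ← sum_mul, ← mul_sum]
  ring

variable [CommRing R] [LinearOrder R] [IsStrictOrderedRing R]

theorem mul_sub_pos_of_strictly_monovary {f g : ι → R} (hfg : ∀ i j, g i < g j → f i < f j)
    {i j : ι} (hij : g i ≠ g j) : 0 < (f i - f j) * (g i - g j) := by
  rcases hij.lt_or_gt with h | h
  · exact mul_pos_of_neg_of_neg (sub_neg.2 (hfg i j h)) (sub_neg.2 h)
  · exact mul_pos (sub_pos.2 (hfg j i h)) (sub_pos.2 h)

theorem mul_sub_nonneg_of_strictly_monovary {f g : ι → R} (hfg : ∀ i j, g i < g j → f i < f j)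
    (i j : ι) : 0 ≤ (f i - f j) * (g i - g j) := by
  by_cases hij : g i = g j
  · simp [hij]
  · exact (mul_sub_pos_of_strictly_monovary hfg hij).le

theorem sum_mul_sum_lt_card_mul_sum [Fintype ι] {f g : ι → R}
    (hfg : ∀ i j, g i < g j → f i < f j)
    (hg : ∃ i j, g i ≠ g j) :
    (∑ i, f i) * ∑ i, g i < Fintype.card ι * ∑ i, f i * g i := by
  obtain ⟨i₀, j₀, hne⟩ := hg
  have hnonneg := mul_sub_nonneg_of_strictly_monovary hfg
  have hrow : 0 < ∑ j, (f i₀ - f j) * (g i₀ - g j) :=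
    sum_pos' (fun j _ => hnonneg i₀ j)
      ⟨j₀, mem_univ _, mul_sub_pos_of_strictly_monovary hfg hne⟩
  have hdouble : 0 < ∑ i, ∑ j, (f i - f j) * (g i - g j) :=
    sum_pos' (fun i _ => sum_nonneg fun j _ => hnonneg i j) ⟨i₀, mem_univ _, hrow⟩
  rw [sum_sum_sub_mul_sub] at hdouble
  linarith

end Chebyshev

theorem sum_softmax_mul {N : ℕ} (τ : ℝ) (σ V : Fin N → ℝ) :
    ∑ i, softmax τ σ i * V i = (∑ i, exp (σ i / τ) * V i) / ∑ j, exp (σ j / τ) := by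
  simp only [softmax, div_mul_eq_mul_div, ← sum_div]

theorem networked_outperforms_centralised_general
    (N : ℕ) (τ : ℝ) (hτ : 0 < τ)
    (V σ : Fin N → ℝ)
    (horder : ∀ i j, σ i > σ j ↔ V i > V j)
    (hV : ∃ i j, V i ≠ V j) :
    ∑ i, softmax τ σ i * V i > (1 / N) * ∑ i, V i := by
  have hweights : ∀ i j, V i < V j → exp (σ i / τ) < exp (σ j / τ) := fun i j h =>
    exp_lt_exp.2 (div_lt_div_of_pos_right ((horder j i).2 h) hτ)
  have hchebyshev := sum_mul_sum_lt_card_mul_sum hweights hV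
  rw [Fintype.card_fin] at hchebyshev
  obtain ⟨i₀, -⟩ := hV
  have hN : (0 : ℝ) < N := by exact_mod_cast i₀.pos
  have hZ : 0 < ∑ j, exp (σ j / τ) := sum_pos (fun j _ => exp_pos _) ⟨i₀, mem_univ _⟩
  rw [sum_softmax_mul, one_div_mul_eq_div, gt_iff_lt, div_lt_div_iff₀ hN hZ]
  linarith

/-- Theorem 1: if the finite-horizon approximations `σ` preserve the ordering of the
true returns `V` (Assumption 1) and `V` is not constant, then the expected true return
of the policy adopted via softmax selection over `σ` (networked population) strictly
exceeds that of a uniformly random policy (centralised population). -/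
theorem networked_outperforms_centralised
    (N : ℕ) (hN : 1 ≤ N) (τ : ℝ) (hτ : 0 < τ)
    (V σ : Fin N → ℝ)
    (horder : ∀ i j, σ i > σ j ↔ V i > V j)
    (hV : ∃ i j, V i ≠ V j) :
    ∑ i, softmax τ σ i * V i > (1 / N) * ∑ i, V i :=
  networked_outperforms_centralised_general N τ hτ V σ horder hV
end

section
/- Strict monotonicity of the softmax-weighted average in the temperature: let N ≥ 1 and let σ : Fin N → ℝ be not constant. Define f : (0, ∞) → ℝ by f(τ) = ∑ i, p_τ i * σ i, where p_τ is the softmax distribution with temperature τ associated to σ. Then f is strictly antitone on (0, ∞): for 0 < τ₁ < τ₂ we have f(τ₁) > f(τ₂). (Lower communication temperatures put strictly more expected weight on better-performing policies.) -/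
/-!
Writing `β = 1 / τ`, the softmax average is the mean of `σ` under the Gibbs weights
`exp (β * σ i)`. Raising `β` to `β'` tilts these weights by the increasing factor
`exp ((β' - β) * σ i)`, and by the weighted Chebyshev sum inequality a tilt by an increasing
function of a non-constant `σ` strictly raises its mean: the double sum
`∑ i j, w i * w j * (σ i - σ j) * (g (σ i) - g (σ j))` has nonnegative terms, one of them positive.
-/

open Finset Real

section Chebyshev

variable {ι R : Type*} [Fintype ι] [CommRing R]

theorem sum_sum_mul_mul_sub_mul_sub (w f g : ι → R) :
    ∑ i, ∑ j, w i * w j * ((f i - f j) * (g i - g j)) =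
      2 * ((∑ i, w i * g i * f i) * ∑ i, w i - (∑ i, w i * f i) * ∑ i, w i * g i) := by
  have hexpand (i j : ι) : w i * w j * ((f i - f j) * (g i - g j)) =
      w i * g i * f i * w j - w i * f i * (w j * g j) - w i * g i * (w j * f j)
        + w i * (w j * g j * f j) := by ring
  simp only [hexpand, sum_add_distrib, sum_sub_distrib, ← mul_sum, ← sum_mul]
  ring

variable [LinearOrder R] [IsStrictOrderedRing R]

theorem StrictMono.sub_mul_sub_pos {g : R → R} (hg : StrictMono g) {a b : R} (hab : a ≠ b) :
    0 < (a - b) * (g a - g b) := by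
  rcases hab.lt_or_gt with h | h
  · exact mul_pos_of_neg_of_neg (sub_neg.2 h) (sub_neg.2 (hg h))
  · exact mul_pos (sub_pos.2 h) (sub_pos.2 (hg h))

theorem StrictMono.sub_mul_sub_nonneg {g : R → R} (hg : StrictMono g) (a b : R) :
    0 ≤ (a - b) * (g a - g b) := by
  rcases eq_or_ne a b with rfl | hab
  · simp
  · exact (hg.sub_mul_sub_pos hab).le

theorem sum_mul_sum_lt_sum_mul_sum_of_strictMono {w x : ι → R} {g : R → R}
    (hw : ∀ i, 0 < w i) (hg : StrictMono g) (hx : ∃ i j, x i ≠ x j) :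
    (∑ i, w i * x i) * ∑ i, w i * g (x i) < (∑ i, w i * g (x i) * x i) * ∑ i, w i := by
  obtain ⟨i₀, j₀, hij⟩ := hx
  have hpos : 0 < ∑ i, ∑ j, w i * w j * ((x i - x j) * (g (x i) - g (x j))) := by
    rw [← sum_product']
    refine sum_pos' (fun p _ ↦ ?_) ⟨(i₀, j₀), mem_univ _, ?_⟩
    · exact mul_nonneg (mul_pos (hw _) (hw _)).le (hg.sub_mul_sub_nonneg _ _)
    · exact mul_pos (mul_pos (hw _) (hw _)) (hg.sub_mul_sub_pos hij)
  rw [sum_sum_mul_mul_sub_mul_sub] at hpos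
  linarith

end Chebyshev

theorem strictMono_sum_exp_mul_div_sum_exp {ι : Type*} [Fintype ι] {x : ι → ℝ}
    (hx : ∃ i j, x i ≠ x j) :
    StrictMono fun β ↦ (∑ i, exp (β * x i) * x i) / ∑ i, exp (β * x i) := by
  intro β₁ β₂ hβ
  have hne : (univ : Finset ι).Nonempty := let ⟨i, _⟩ := hx; ⟨i, mem_univ i⟩
  have hZ (β : ℝ) : 0 < ∑ i, exp (β * x i) := sum_pos (fun i _ ↦ exp_pos _) hne
  have htilt (i : ι) : exp (β₂ * x i) = exp (β₁ * x i) * exp ((β₂ - β₁) * x i) := by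
    rw [← exp_add]; ring_nf
  simp only [htilt]
  rw [div_lt_div_iff₀ (hZ β₁) (by simpa only [htilt] using hZ β₂)]
  exact sum_mul_sum_lt_sum_mul_sum_of_strictMono (fun i ↦ exp_pos (β₁ * x i))
    (exp_strictMono.comp (strictMono_mul_left_of_pos (sub_pos.2 hβ))) hx

theorem sum_softmax_mul_eq {N : ℕ} (τ : ℝ) (σ : Fin N → ℝ) :
    ∑ i, softmax τ σ i * σ i = (∑ i, exp (τ⁻¹ * σ i) * σ i) / ∑ i, exp (τ⁻¹ * σ i) := by
  simp only [softmax, div_mul_eq_mul_div, ← sum_div, div_eq_inv_mul (σ _) τ]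

theorem softmax_weighted_avg_strictAntiOn_general
    (N : ℕ) (σ : Fin N → ℝ) (hσ : ∃ i j, σ i ≠ σ j) :
    StrictAntiOn (fun τ : ℝ => ∑ i, softmax τ σ i * σ i) (Set.Ioi 0) := by
  intro τ₁ hτ₁ τ₂ _ hτ
  simp only [sum_softmax_mul_eq]
  exact strictMono_sum_exp_mul_div_sum_exp hσ (inv_strictAnti₀ hτ₁ hτ)

/-- If `σ` is not constant, the softmax-weighted average `τ ↦ ∑ i, p_τ i * σ i` is
strictly antitone on `(0, ∞)`. -/
theorem softmax_weighted_avg_strictAntiOn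
    (N : ℕ) (hN : 1 ≤ N) (σ : Fin N → ℝ) (hσ : ∃ i j, σ i ≠ σ j) :
    StrictAntiOn (fun τ : ℝ => ∑ i, softmax τ σ i * σ i) (Set.Ioi 0) :=
  softmax_weighted_avg_strictAntiOn_general N σ hσ
end
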